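/- arXiv:2507.00495 — 2 statements merged into one kernel-verified Lean document; each statement's English description precedes it below -/
import Mathlib

section
/- For every positive even integer d and integers k, t with k − 1 ≥ t ≥ 2, F_{kd} = (L_d − 1) F_{(k−1)d} + (L_d − 2) ∑_{i=t}^{k−2} F_{id} + (L_d − 1) F_{(t−1)d} − F_{(t−2)d}. -/
def lucas : ℕ → ℕ
  | 0 => 2
  | 1 => 1
  | n + 2 => lucas (n + 1) + lucas n

lemma lucas_eq_fib : ∀ n, lucas (n + 1) = Nat.fib n + Nat.fib (n + 2)
  | 0 => rfl
  | 1 => rfl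
  | n + 2 => by
    rw [lucas, lucas_eq_fib (n + 1), lucas_eq_fib n,
      Nat.fib_add_two (n := n + 2), Nat.fib_add_two (n := n + 1),
      Nat.fib_add_two (n := n)]
    ring

lemma cassini : ∀ n : ℕ, (Nat.fib (n + 1) : ℤ) ^ 2 - Nat.fib (n + 2) * Nat.fib n = (-1) ^ n
  | 0 => by norm_num
  | n + 1 => by
    have h := cassini n
    have h2 : (Nat.fib (n + 3) : ℤ) = Nat.fib (n + 1) + Nat.fib (n + 2) := by
      exact_mod_cast Nat.fib_add_two (n := n + 1)
    have h0 : (Nat.fib (n + 2) : ℤ) = Nat.fib n + Nat.fib (n + 1) := by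
      exact_mod_cast Nat.fib_add_two (n := n)
    rw [pow_succ]
    linear_combination (-1 : ℤ) * h + (Nat.fib (n + 2) : ℤ) * h0 - (Nat.fib (n + 1) : ℤ) * h2

lemma key_rec (d : ℕ) (hd : 0 < d) (hde : Even d) (a : ℕ) :
    (Nat.fib (a + 2 * d) : ℤ) + Nat.fib a = lucas d * Nat.fib (a + d) := by
  obtain ⟨e, rfl⟩ : ∃ e, d = e + 1 := ⟨d - 1, by omega⟩
  have h1 : (Nat.fib (a + (e + 1) + e + 1) : ℤ) =
      Nat.fib (a + (e + 1)) * Nat.fib e + Nat.fib (a + (e + 1) + 1) * Nat.fib (e + 1) := by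
    exact_mod_cast Nat.fib_add (a + (e + 1)) e
  have h2 : (Nat.fib (a + (e + 1) + 1) : ℤ) = Nat.fib a * Nat.fib (e + 1) +
      Nat.fib (a + 1) * Nat.fib (e + 2) := by
    exact_mod_cast Nat.fib_add a (e + 1)
  have h3 : (Nat.fib (a + (e + 1)) : ℤ) = Nat.fib a * Nat.fib e +
      Nat.fib (a + 1) * Nat.fib (e + 1) := by
    have := Nat.fib_add a e
    rw [show a + e + 1 = a + (e + 1) from by ring] at this
    exact_mod_cast this
  have hc := cassini e
  have he : (-1 : ℤ) ^ e = -1 := by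
    have : Odd e := by rcases hde with ⟨m, hm⟩; exact ⟨m - 1, by omega⟩
    exact this.neg_one_pow
  rw [he] at hc
  have hl : (lucas (e + 1) : ℤ) = Nat.fib e + Nat.fib (e + 2) := by
    exact_mod_cast lucas_eq_fib e
  rw [show a + 2 * (e + 1) = a + (e + 1) + e + 1 from by ring]
  linear_combination h1 - (Nat.fib (a + (e + 1)) : ℤ) * hl + (Nat.fib (e + 1) : ℤ) * h2
    - (Nat.fib (e + 2) : ℤ) * h3 + (Nat.fib a : ℤ) * hc

lemma aux_main (d t : ℕ) (hd : 0 < d) (hde : Even d) (ht : 2 ≤ t) : ∀ j : ℕ,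
    (Nat.fib ((t + 1 + j) * d) : ℤ)
      = ((lucas d : ℤ) - 1) * Nat.fib ((t + j) * d)
        + ((lucas d : ℤ) - 2) * ∑ i ∈ Finset.Icc t (t + j - 1), (Nat.fib (i * d) : ℤ)
        + ((lucas d : ℤ) - 1) * Nat.fib ((t - 1) * d)
        - Nat.fib ((t - 2) * d)
  | 0 => by
    have hs : Finset.Icc t (t + 0 - 1) = ∅ := by apply Finset.Icc_eq_empty; omega
    rw [hs]
    have h1 := key_rec d hd hde ((t - 1) * d)
    have h2 := key_rec d hd hde ((t - 2) * d)
    have e1 : (t - 1) * d + 2 * d = (t + 1 + 0) * d := by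
      calc (t-1)*d + 2*d = (t - 1 + 2) * d := by ring
        _ = (t + 1 + 0) * d := by rw [show t - 1 + 2 = t + 1 + 0 from by omega]
    have e2 : (t - 1) * d + d = (t + 0) * d := by
      calc (t-1)*d + d = (t - 1 + 1) * d := by ring
        _ = (t + 0) * d := by rw [show t - 1 + 1 = t + 0 from by omega]
    have e3 : (t - 2) * d + 2 * d = (t + 0) * d := by
      calc (t-2)*d + 2*d = (t - 2 + 2) * d := by ring
        _ = (t + 0) * d := by rw [show t - 2 + 2 = t + 0 from by omega]
    have e4 : (t - 2) * d + d = (t - 1) * d := by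
      calc (t-2)*d + d = (t - 2 + 1) * d := by ring
        _ = (t - 1) * d := by rw [show t - 2 + 1 = t - 1 from by omega]
    rw [e1, e2] at h1
    rw [e3, e4] at h2
    simp only [Finset.sum_empty]
    linarith [h1, h2]
  | j + 1 => by
    have ih := aux_main d t hd hde ht j
    have h1 := key_rec d hd hde ((t + j) * d)
    rw [show (t + j) * d + 2 * d = (t + 1 + (j + 1)) * d from by ring,
      show (t + j) * d + d = (t + (j + 1)) * d from by ring] at h1
    have hsum := Finset.sum_Icc_succ_top (a := t) (b := t + j - 1)
      (by omega : t ≤ t + j - 1 + 1) (fun i => (Nat.fib (i * d) : ℤ))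
    rw [show t + j - 1 + 1 = t + j from by omega] at hsum
    rw [show t + (j + 1) - 1 = t + j from by omega, hsum]
    rw [show (t + 1 + j) * d = (t + (j + 1)) * d from by ring] at ih
    linarith [ih, h1]

theorem fib_sum_expansion (d k t : ℕ) (hd : 0 < d) (hde : Even d)
    (ht : 2 ≤ t) (htk : t ≤ k - 1) :
    (Nat.fib (k * d) : ℤ)
      = ((lucas d : ℤ) - 1) * Nat.fib ((k - 1) * d)
        + ((lucas d : ℤ) - 2) * ∑ i ∈ Finset.Icc t (k - 2), (Nat.fib (i * d) : ℤ)
        + ((lucas d : ℤ) - 1) * Nat.fib ((t - 1) * d)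
        - Nat.fib ((t - 2) * d) := by
  obtain ⟨j, rfl⟩ : ∃ j, k = t + 1 + j := ⟨k - t - 1, by omega⟩
  have h := aux_main d t hd hde ht j
  rw [show t + 1 + j - 1 = t + j from by omega, show t + 1 + j - 2 = t + j - 1 from by omega]
  exact h
end

section
/- Let d be even and x a positive integer with greedy coefficients λ_1, …, λ_k with respect to 1, F_{2d}/F_d, …, F_{kd}/F_d. Then there is no index i < k−1 with λ_i = λ_{i+1} = L_d − 1. -/
/-- the `i`-th greedy weight `F_{id}/F_d`. -/
def gw (d i : ℕ) : ℕ := Nat.fib (i * d) / Nat.fib d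

/-- `gRem d k x m` is the remaining value after the greedy algorithm for `x`,
with respect to the weights `gw d 1, …, gw d k`, has processed the top `m`
indices `k, k-1, …, k-m+1`. -/
def gRem (d k x : ℕ) : ℕ → ℕ
  | 0 => x
  | m + 1 => gRem d k x m % gw d (k - m)

/-- the `i`-th greedy coefficient `λ_i` of `x` w.r.t. `gw d 1, …, gw d k`:
`λ_i = ⌊(x − ∑_{j>i} λ_j · gw d j) / gw d i⌋`. -/
def gLam (d k x i : ℕ) : ℕ := gRem d k x (k - i) / gw d i

lemma cassini_even (n : ℕ) :
    Nat.fib (2*n+1) * Nat.fib (2*n+1) = Nat.fib (2*n+2) * Nat.fib (2*n) + 1 := by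
  induction n with
  | zero => simp
  | succ n ih =>
    have h1 : Nat.fib (2*n+2) = Nat.fib (2*n) + Nat.fib (2*n+1) := Nat.fib_add_two
    have h2 : Nat.fib (2*n+3) = Nat.fib (2*n+1) + Nat.fib (2*n+2) := by
      have : 2*n+3 = (2*n+1)+2 := by ring
      rw [this, Nat.fib_add_two]
    have h3 : Nat.fib (2*n+4) = Nat.fib (2*n+2) + Nat.fib (2*n+3) := by
      have : 2*n+4 = (2*n+2)+2 := by ring
      rw [this, Nat.fib_add_two]
    have e : 2*(n+1)+1 = 2*n+3 := by ring
    have e2 : 2*(n+1)+2 = 2*n+4 := by ring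
    have e3 : 2*(n+1) = 2*n+2 := by ring
    rw [e, e2, e3, h3, h2]
    nlinarith [ih, h1]

lemma fibkey (d : ℕ) (hde : Even d) (j : ℕ) :
    Nat.fib (j+d) * Nat.fib (d+1) = Nat.fib (j+d+1) * Nat.fib d + Nat.fib j := by
  induction j using Nat.twoStepInduction with
  | zero => simp [Nat.mul_comm]
  | one =>
    obtain ⟨n, hn⟩ := hde
    have hd2 : d = 2*n := by omega
    subst hd2
    have := cassini_even n
    have e1 : 1 + 2*n = 2*n+1 := by ring
    rw [e1]
    have e2 : 2*n+1+1 = 2*n+2 := by ring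
    rw [e2]
    simpa using this
  | more j ih1 ih2 =>
    have h1 : Nat.fib (j+2+d) = Nat.fib (j+d) + Nat.fib (j+1+d) := by
      have e : j+2+d = (j+d)+2 := by ring
      have e' : (j+d)+1 = j+1+d := by ring
      rw [e, Nat.fib_add_two, e']
    have h2 : Nat.fib (j+2+d+1) = Nat.fib (j+d+1) + Nat.fib (j+1+d+1) := by
      have e : j+2+d+1 = (j+d+1)+2 := by ring
      have e' : (j+d+1)+1 = j+1+d+1 := by ring
      rw [e, Nat.fib_add_two, e']
    have h3 : Nat.fib (j+2) = Nat.fib j + Nat.fib (j+1) := Nat.fib_add_two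
    rw [h1, h2, h3]
    nlinarith [ih1, ih2]

lemma lucas_fib : ∀ n, lucas (n+1) = Nat.fib (n+2) + Nat.fib n := by
  intro n
  induction n using Nat.twoStepInduction with
  | zero => simp [lucas]
  | one => rfl
  | more n ih1 ih2 =>
    show lucas (n+1+2) = _
    rw [lucas, ih1, ih2]
    have h1 : Nat.fib (n+2+2) = Nat.fib (n+2) + Nat.fib (n+2+1) := Nat.fib_add_two
    have h2 : Nat.fib (n+2) = Nat.fib n + Nat.fib (n+1) := Nat.fib_add_two
    have h3 : n+1+2 = n+2+1 := by ring
    rw [h3] at *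
    omega

lemma lucas_pos (n : ℕ) : 0 < lucas n := by
  induction n using Nat.twoStepInduction with
  | zero => simp [lucas]
  | one => simp [lucas]
  | more n ih1 ih2 => rw [lucas]; omega

/-- key recurrence at the level of Fibonacci numbers -/
lemma fib_rec (d : ℕ) (hd : 0 < d) (hde : Even d) (m : ℕ) :
    Nat.fib ((m+2)*d) + Nat.fib (m*d) = lucas d * Nat.fib ((m+1)*d) := by
  obtain ⟨e, he⟩ : ∃ e, d = e + 1 := ⟨d - 1, by omega⟩
  have hA := fibkey d hde (m*d)
  have hB : Nat.fib ((m+2)*d) =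
      Nat.fib (m*d+d) * Nat.fib e + Nat.fib (m*d+d+1) * Nat.fib (e+1) := by
    have h : (m+2)*d = (m*d+d) + e + 1 := by rw [he]; ring
    rw [h, Nat.fib_add]
  have hC : lucas d = Nat.fib (d+1) + Nat.fib e := by
    rw [he, lucas_fib e]
  have hf : Nat.fib (e+1) = Nat.fib d := by rw [he]
  have hg : (m+1)*d = m*d + d := by ring
  rw [hg, hB, hC, hf]
  have hexp : (Nat.fib (d+1) + Nat.fib e) * Nat.fib (m*d+d)
      = Nat.fib (m*d+d) * Nat.fib (d+1) + Nat.fib (m*d+d) * Nat.fib e := by ring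
  have hcomm : Nat.fib (m*d+d) * Nat.fib e = Nat.fib (m*d+d) * Nat.fib e := rfl
  rw [hexp]
  have hc2 : Nat.fib (m*d+d) * Nat.fib e = Nat.fib (m*d+d) * Nat.fib e := rfl
  -- goal : fib(m*d+d)*fib e + fib(m*d+d+1)*fib d + fib(m*d)
  --      = fib(m*d+d)*fib(d+1) + fib(m*d+d)*fib e
  omega

/-- the divisibility `fib d ∣ fib (i*d)` expressed multiplicatively -/
lemma gw_mul (d : ℕ) (hd : 0 < d) (i : ℕ) :
    Nat.fib d * gw d i = Nat.fib (i * d) :=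
  Nat.mul_div_cancel' (Nat.fib_dvd d (i*d) ⟨i, by ring⟩)

lemma gw_rec (d : ℕ) (hd : 0 < d) (hde : Even d) (m : ℕ) :
    gw d (m+2) + gw d m = lucas d * gw d (m+1) := by
  have hfpos : 0 < Nat.fib d := Nat.fib_pos.mpr hd
  apply Nat.eq_of_mul_eq_mul_left hfpos
  rw [Nat.mul_add, gw_mul d hd, gw_mul d hd, Nat.mul_left_comm, gw_mul d hd]
  exact fib_rec d hd hde m

lemma gw_pos (d : ℕ) (hd : 0 < d) (i : ℕ) (hi : 0 < i) : 0 < gw d i := by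
  have hfpos : 0 < Nat.fib d := Nat.fib_pos.mpr hd
  have h1 : Nat.fib d ≤ Nat.fib (i*d) := Nat.fib_mono (by nlinarith)
  exact Nat.div_pos h1 hfpos

lemma gw_le (d : ℕ) (hd : 0 < d) (hde : Even d) (i : ℕ) (hi : 1 ≤ i) :
    gw d (i+1) ≤ lucas d * gw d i := by
  obtain ⟨j, rfl⟩ : ∃ j, i = j + 1 := ⟨i - 1, by omega⟩
  have h := gw_rec d hd hde j
  show gw d (j+2) ≤ lucas d * gw d (j+1)
  omega

theorem greedy_no_adjacent_max (d k x : ℕ) (hd : 0 < d) (hde : Even d) (hk : 1 ≤ k)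
    (hx : 0 < x)
    (hx1 : Nat.fib (k * d) / Nat.fib d ≤ x)
    (hx2 : x < Nat.fib ((k + 1) * d) / Nat.fib d) :
    ¬ ∃ i, 1 ≤ i ∧ i < k - 1 ∧
        gLam d k x i = lucas d - 1 ∧ gLam d k x (i + 1) = lucas d - 1 := by
  rintro ⟨i, hi1, hik, hli, hli1⟩
  have hik2 : i + 2 ≤ k := by omega
  have hLpos : 0 < lucas d := lucas_pos d
  have hapos : 0 < gw d i := gw_pos d hd i (by omega)
  have hcpos : 0 < gw d (i+2) := gw_pos d hd (i+2) (by omega)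
  -- r0 = r1 % gw d (i+1)
  have h01 : gRem d k x (k-i) = gRem d k x (k-(i+1)) % gw d (i+1) := by
    have e1 : k - i = (k - (i+1)) + 1 := by omega
    have e2 : k - (k - (i+1)) = i + 1 := by omega
    rw [e1, gRem, e2]
  -- r1 < gw d (i+2)
  have h1c : gRem d k x (k-(i+1)) < gw d (i+2) := by
    have e1 : k - (i+1) = (k - (i+2)) + 1 := by omega
    have e2 : k - (k - (i+2)) = i + 2 := by omega
    rw [e1, gRem, e2]
    exact Nat.mod_lt _ hcpos
  -- decomposition of r1
  have hdiv1 : gRem d k x (k-(i+1)) / gw d (i+1) = lucas d - 1 := hli1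
  have hdm : gw d (i+1) * (lucas d - 1) + gRem d k x (k-i) = gRem d k x (k-(i+1)) := by
    have h := Nat.div_add_mod (gRem d k x (k-(i+1))) (gw d (i+1))
    rw [hdiv1] at h
    rw [h01]; exact h
  -- lower bound for r0
  have hdiv0 : gRem d k x (k-i) / gw d i = lucas d - 1 := hli
  have hr0ge : (lucas d - 1) * gw d i ≤ gRem d k x (k-i) := by
    have h := Nat.div_mul_le_self (gRem d k x (k-i)) (gw d i)
    rw [hdiv0] at h; exact h
  have hrec : gw d (i+2) + gw d i = lucas d * gw d (i+1) := gw_rec d hd hde i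
  have hble : gw d (i+1) ≤ lucas d * gw d i := gw_le d hd hde i hi1
  obtain ⟨t, ht⟩ : ∃ t, lucas d = t + 1 := ⟨lucas d - 1, by omega⟩
  have e1 : (lucas d - 1) * gw d i + gw d i = lucas d * gw d i := by
    rw [ht]; simp; ring
  have e2 : gw d (i+1) * (lucas d - 1) + gw d (i+1) = lucas d * gw d (i+1) := by
    rw [ht]; simp; ring
  omega
end
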